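/- Let K > 0 and Φ_0 ∈ ℝ^d. There exists a constant C > 0 depending only on Φ_0, σ, and K (and not on c) such that for every c > 0, every measurable Θ : [0, T] → ℝ^d with sup_{0≤t≤T} ‖Θ_t‖ ≤ K, and every t ∈ [0, T], one has ‖ Φ_0 · exp(−c t σ) + c · ∫_0^t Θ_v σ · exp(c(v−t)σ) dv ‖ ≤ C. -/

import Mathlib

/-!
Diagonalize `σ = U · diag(μ) · Uᵀ` with `U` orthogonal and `μ ≥ 0`. Right multiplication by an
orthogonal matrix preserves the Euclidean norm, so `‖x · U diag(w) Uᵀ‖ ≤ (max |wᵢ|) ‖x‖`. Hence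
the free term is contracted, as `exp(−ctμᵢ) ≤ 1`, and the kernel `c σ exp(c(v−t)σ)` has norm at
most `∑ᵢ cμᵢ exp(cμᵢ(v−t))`, whose integral over `[0, t]` is `∑ᵢ (1 − exp(−cμᵢt)) ≤ d`,
whatever `c` is. So `C = ‖Φ₀‖ + dK + 1` works.
-/

open MeasureTheory Matrix Filter

noncomputable section

/-- Euclidean norm on row vectors in `ℝ^d`. -/
def euclNorm {d : ℕ} (x : Fin d → ℝ) : ℝ := Real.sqrt (∑ i, (x i) ^ 2)

/-- The explicit solution `Φ_t = Φ₀·exp(−ctσ) + c·∫_0^t Θ_v σ·exp(c(v−t)σ) dv`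
of the linear ODE `Φ' = c(Θ − Φ)σ`. -/
def PhiSol {d : ℕ} (σ : Matrix (Fin d) (Fin d) ℝ) (c : ℝ) (Φ₀ : Fin d → ℝ)
    (Θ : ℝ → Fin d → ℝ) (t : ℝ) : Fin d → ℝ :=
  Φ₀ ᵥ* NormedSpace.exp ((-(c * t)) • σ) +
    c • ∫ v in (0 : ℝ)..t, (Θ v ᵥ* σ) ᵥ* NormedSpace.exp ((c * (v - t)) • σ)

variable {d : ℕ}

lemma euclNorm_eq_norm (x : Fin d → ℝ) :
    euclNorm x = ‖(EuclideanSpace.equiv (Fin d) ℝ).symm x‖ := by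
  simp [euclNorm, EuclideanSpace.norm_eq]

lemma euclNorm_eq_sqrt_dotProduct (x : Fin d → ℝ) : euclNorm x = Real.sqrt (x ⬝ᵥ x) := by
  simp [euclNorm, dotProduct, sq]

lemma euclNorm_nonneg (x : Fin d → ℝ) : 0 ≤ euclNorm x := Real.sqrt_nonneg _

lemma euclNorm_add_le (x y : Fin d → ℝ) : euclNorm (x + y) ≤ euclNorm x + euclNorm y := by
  simp only [euclNorm_eq_norm, map_add]
  exact norm_add_le _ _

lemma euclNorm_smul (c : ℝ) (x : Fin d → ℝ) : euclNorm (c • x) = |c| * euclNorm x := by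
  simp only [euclNorm_eq_norm, map_smul, norm_smul, Real.norm_eq_abs]

lemma euclNorm_intervalIntegral_le {f : ℝ → Fin d → ℝ} {g : ℝ → ℝ} {t : ℝ} (ht : 0 ≤ t)
    (hfg : ∀ v ∈ Set.Ioc 0 t, euclNorm (f v) ≤ g v) (hg : IntervalIntegrable g volume 0 t) :
    euclNorm (∫ v in (0 : ℝ)..t, f v) ≤ ∫ v in (0 : ℝ)..t, g v := by
  have hcomm : (EuclideanSpace.equiv (Fin d) ℝ).symm (∫ v in (0 : ℝ)..t, f v) =
      ∫ v in (0 : ℝ)..t, (EuclideanSpace.equiv (Fin d) ℝ).symm (f v) := by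
    simp only [intervalIntegral, map_sub, ContinuousLinearEquiv.integral_comp_comm]
  rw [euclNorm_eq_norm, hcomm]
  refine intervalIntegral.norm_integral_le_of_norm_le ht (ae_of_all _ fun v hv => ?_) hg
  rw [← euclNorm_eq_norm]
  exact hfg v hv

lemma euclNorm_vecMul_unitary (u : unitary (Matrix (Fin d) (Fin d) ℝ)) (x : Fin d → ℝ) :
    euclNorm (x ᵥ* (u : Matrix (Fin d) (Fin d) ℝ)) = euclNorm x := by
  have hu : (u : Matrix (Fin d) (Fin d) ℝ) * (u : Matrix (Fin d) (Fin d) ℝ)ᵀ = 1 := by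
    simpa [star_eq_conjTranspose] using Unitary.coe_mul_star_self u
  have hdot : (x ᵥ* (u : Matrix (Fin d) (Fin d) ℝ)) ⬝ᵥ (x ᵥ* (u : Matrix (Fin d) (Fin d) ℝ)) =
      x ⬝ᵥ x := by
    rw [← dotProduct_mulVec, ← vecMul_transpose, vecMul_vecMul, hu, vecMul_one]
  rw [euclNorm_eq_sqrt_dotProduct, euclNorm_eq_sqrt_dotProduct, hdot]

lemma euclNorm_vecMul_diagonal_le {v : Fin d → ℝ} {b : ℝ} (hb : 0 ≤ b) (hv : ∀ i, |v i| ≤ b)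
    (x : Fin d → ℝ) : euclNorm (x ᵥ* diagonal v) ≤ b * euclNorm x := by
  have hsq : ∑ i, (x i * v i) ^ 2 ≤ b ^ 2 * ∑ i, x i ^ 2 := by
    rw [Finset.mul_sum]
    refine Finset.sum_le_sum fun i _ => ?_
    rw [mul_pow, mul_comm]
    exact mul_le_mul_of_nonneg_right (sq_le_sq' (neg_le_of_abs_le (hv i)) (le_of_abs_le (hv i)))
      (sq_nonneg _)
  calc euclNorm (x ᵥ* diagonal v) = Real.sqrt (∑ i, (x i * v i) ^ 2) := by
        simp [euclNorm, vecMul_diagonal]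
    _ ≤ Real.sqrt (b ^ 2 * ∑ i, x i ^ 2) := Real.sqrt_le_sqrt hsq
    _ = b * euclNorm x := by rw [Real.sqrt_mul (sq_nonneg b), Real.sqrt_sq hb, euclNorm]

lemma euclNorm_vecMul_conj_diagonal_le (u : unitary (Matrix (Fin d) (Fin d) ℝ))
    {v : Fin d → ℝ} {b : ℝ} (hb : 0 ≤ b) (hv : ∀ i, |v i| ≤ b) (x : Fin d → ℝ) :
    euclNorm (x ᵥ* Unitary.conjStarAlgAut ℝ _ u (diagonal v)) ≤ b * euclNorm x := by
  rw [Unitary.conjStarAlgAut_apply, ← vecMul_vecMul, ← vecMul_vecMul, ← Unitary.coe_star,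
    euclNorm_vecMul_unitary]
  calc euclNorm (x ᵥ* (u : Matrix (Fin d) (Fin d) ℝ) ᵥ* diagonal v)
        ≤ b * euclNorm (x ᵥ* (u : Matrix (Fin d) (Fin d) ℝ)) :=
        euclNorm_vecMul_diagonal_le hb hv _
    _ = b * euclNorm x := by rw [euclNorm_vecMul_unitary]

lemma integral_mul_exp_mul_sub (a t : ℝ) :
    ∫ v in (0 : ℝ)..t, a * Real.exp (a * (v - t)) = 1 - Real.exp (-(a * t)) := by
  have hderiv : ∀ v ∈ Set.uIcc (0 : ℝ) t,
      HasDerivAt (fun w => Real.exp (a * (w - t))) (a * Real.exp (a * (v - t))) v := by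
    intro v _
    simpa [mul_comm] using ((hasDerivAt_id v).sub_const t |>.const_mul a).exp
  rw [intervalIntegral.integral_eq_sub_of_hasDerivAt hderiv (Continuous.intervalIntegrable
    (by fun_prop) _ _)]
  simp

lemma Matrix.PosSemidef.exists_eq_conjStarAlgAut_diagonal {σ : Matrix (Fin d) (Fin d) ℝ}
    (hσ : σ.PosSemidef) : ∃ (u : unitary (Matrix (Fin d) (Fin d) ℝ)) (μ : Fin d → ℝ),
      (∀ i, 0 ≤ μ i) ∧ σ = Unitary.conjStarAlgAut ℝ _ u (diagonal μ) :=
  ⟨_, _, hσ.eigenvalues_nonneg, by simpa using hσ.isHermitian.spectral_theorem⟩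

section Conjugate

variable (u : unitary (Matrix (Fin d) (Fin d) ℝ)) {μ : Fin d → ℝ}

lemma exp_smul_conjStarAlgAut_diagonal (μ : Fin d → ℝ) (s : ℝ) :
    NormedSpace.exp (s • Unitary.conjStarAlgAut ℝ _ u (diagonal μ)) =
      Unitary.conjStarAlgAut ℝ _ u (diagonal fun i => Real.exp (s * μ i)) := by
  have hconj : ∀ X : Matrix (Fin d) (Fin d) ℝ,
      NormedSpace.exp (Unitary.conjStarAlgAut ℝ _ u X) =
        Unitary.conjStarAlgAut ℝ _ u (NormedSpace.exp X) :=
    Matrix.exp_units_conj (Unitary.toUnits u)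
  rw [← map_smul, ← diagonal_smul, hconj, exp_diagonal]
  congr 2
  ext i
  simp [Real.exp_eq_exp_ℝ]

lemma euclNorm_vecMul_exp_neg_smul_le (hμ : ∀ i, 0 ≤ μ i) {s : ℝ} (hs : 0 ≤ s)
    (x : Fin d → ℝ) :
    euclNorm (x ᵥ* NormedSpace.exp ((-s) • Unitary.conjStarAlgAut ℝ _ u (diagonal μ))) ≤
      euclNorm x := by
  rw [exp_smul_conjStarAlgAut_diagonal]
  refine (euclNorm_vecMul_conj_diagonal_le u zero_le_one (fun i => ?_) x).trans_eq (one_mul _)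
  rw [abs_of_pos (Real.exp_pos _), Real.exp_le_one_iff, neg_mul]
  exact neg_nonpos.mpr (mul_nonneg hs (hμ i))

lemma euclNorm_vecMul_mul_exp_smul_le (hμ : ∀ i, 0 ≤ μ i) (s : ℝ) (x : Fin d → ℝ) :
    euclNorm (x ᵥ* (Unitary.conjStarAlgAut ℝ _ u (diagonal μ) *
        NormedSpace.exp (s • Unitary.conjStarAlgAut ℝ _ u (diagonal μ)))) ≤
      (∑ i, μ i * Real.exp (s * μ i)) * euclNorm x := by
  have hterm : ∀ i, 0 ≤ μ i * Real.exp (s * μ i) := fun i => mul_nonneg (hμ i) (Real.exp_pos _).le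
  rw [exp_smul_conjStarAlgAut_diagonal, ← map_mul, diagonal_mul_diagonal]
  refine euclNorm_vecMul_conj_diagonal_le u (Finset.sum_nonneg fun i _ => hterm i)
    (fun i => ?_) x
  rw [abs_of_nonneg (hterm i)]
  exact Finset.single_le_sum (fun j _ => hterm j) (Finset.mem_univ i)

lemma euclNorm_smul_integral_le (hμ : ∀ i, 0 ≤ μ i) {c t K : ℝ} (hc : 0 ≤ c) (ht : 0 ≤ t)
    (hK : 0 ≤ K) {Θ : ℝ → Fin d → ℝ} (hΘ : ∀ v ∈ Set.Ioc 0 t, euclNorm (Θ v) ≤ K) :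
    euclNorm (c • ∫ v in (0 : ℝ)..t, (Θ v ᵥ* Unitary.conjStarAlgAut ℝ _ u (diagonal μ)) ᵥ*
        NormedSpace.exp ((c * (v - t)) • Unitary.conjStarAlgAut ℝ _ u (diagonal μ))) ≤
      d * K := by
  set g : ℝ → ℝ := fun v => K * ∑ i, c * μ i * Real.exp (c * μ i * (v - t))
  have hbound : ∀ v ∈ Set.Ioc 0 t, euclNorm (c • ((Θ v ᵥ* Unitary.conjStarAlgAut ℝ _ u
      (diagonal μ)) ᵥ* NormedSpace.exp ((c * (v - t)) • Unitary.conjStarAlgAut ℝ _ u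
        (diagonal μ)))) ≤ g v := by
    intro v hv
    have hsum : 0 ≤ ∑ i, μ i * Real.exp (c * (v - t) * μ i) :=
      Finset.sum_nonneg fun i _ => mul_nonneg (hμ i) (Real.exp_pos _).le
    rw [euclNorm_smul, abs_of_nonneg hc, vecMul_vecMul]
    calc c * euclNorm _ ≤ c * ((∑ i, μ i * Real.exp (c * (v - t) * μ i)) * K) :=
          mul_le_mul_of_nonneg_left ((euclNorm_vecMul_mul_exp_smul_le u hμ _ _).trans
            (mul_le_mul_of_nonneg_left (hΘ v hv) hsum)) hc
      _ = g v := by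
          simp only [g, Finset.mul_sum, Finset.sum_mul]
          exact Finset.sum_congr rfl fun i _ => by ring_nf
  have hg : ∫ v in (0 : ℝ)..t, g v = K * ∑ i, (1 - Real.exp (-(c * μ i * t))) := by
    rw [intervalIntegral.integral_const_mul, intervalIntegral.integral_finsetSum
      fun i _ => Continuous.intervalIntegrable (by fun_prop) _ _]
    simp only [integral_mul_exp_mul_sub]
  rw [← intervalIntegral.integral_smul]
  calc _ ≤ ∫ v in (0 : ℝ)..t, g v :=
        euclNorm_intervalIntegral_le ht hbound (Continuous.intervalIntegrable (by fun_prop) _ _)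
    _ = K * ∑ i, (1 - Real.exp (-(c * μ i * t))) := hg
    _ ≤ K * ∑ _i : Fin d, 1 := by
        gcongr with i
        linarith [Real.exp_pos (-(c * μ i * t))]
    _ = d * K := by simp [mul_comm]

end Conjugate

lemma euclNorm_phiSol_le {σ : Matrix (Fin d) (Fin d) ℝ} (hσ : σ.PosSemidef) (Φ₀ : Fin d → ℝ)
    {c t K : ℝ} (hc : 0 ≤ c) (ht : 0 ≤ t) (hK : 0 ≤ K) {Θ : ℝ → Fin d → ℝ}
    (hΘ : ∀ v ∈ Set.Ioc 0 t, euclNorm (Θ v) ≤ K) :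
    euclNorm (PhiSol σ c Φ₀ Θ t) ≤ euclNorm Φ₀ + d * K := by
  obtain ⟨u, μ, hμ, rfl⟩ := hσ.exists_eq_conjStarAlgAut_diagonal
  exact (euclNorm_add_le _ _).trans (add_le_add
    (euclNorm_vecMul_exp_neg_smul_le u hμ (mul_nonneg hc ht) Φ₀)
    (euclNorm_smul_integral_le u hμ hc ht hK hΘ))

theorem stmt18_general (T : ℝ) {d : ℕ}
    (σ : Matrix (Fin d) (Fin d) ℝ) (hσ : σ.PosDef)
    (K : ℝ) (hK : 0 < K) (Φ₀ : Fin d → ℝ) :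
    ∃ C : ℝ, 0 < C ∧
      ∀ c : ℝ, 0 < c → ∀ Θ : ℝ → Fin d → ℝ, Measurable Θ →
        (∀ t ∈ Set.Icc (0 : ℝ) T, euclNorm (Θ t) ≤ K) →
        ∀ t ∈ Set.Icc (0 : ℝ) T, euclNorm (PhiSol σ c Φ₀ Θ t) ≤ C := by
  refine ⟨euclNorm Φ₀ + d * K + 1, by positivity [euclNorm_nonneg Φ₀], ?_⟩
  rintro c hc Θ - hΘ t ⟨ht0, htT⟩
  have hbound := euclNorm_phiSol_le hσ.posSemidef Φ₀ hc.le ht0 hK.le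
    fun v hv => hΘ v ⟨hv.1.le, hv.2.trans htT⟩
  linarith

/-- Uniform (in `c`) bound: there is `C > 0` depending only on `Φ₀`, `σ`, `K` such
that for all `c > 0` and all measurable `Θ` bounded by `K` on `[0,T]`, the explicit
solution is bounded by `C` on `[0,T]`. -/
theorem stmt18 (T : ℝ) (hT : 0 < T) {d : ℕ} (hd : 1 ≤ d)
    (σ : Matrix (Fin d) (Fin d) ℝ) (hσ : σ.PosDef)
    (K : ℝ) (hK : 0 < K) (Φ₀ : Fin d → ℝ) :
    ∃ C : ℝ, 0 < C ∧
      ∀ c : ℝ, 0 < c → ∀ Θ : ℝ → Fin d → ℝ, Measurable Θ →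
        (∀ t ∈ Set.Icc (0 : ℝ) T, euclNorm (Θ t) ≤ K) →
        ∀ t ∈ Set.Icc (0 : ℝ) T, euclNorm (PhiSol σ c Φ₀ Θ t) ≤ C :=
  stmt18_general T σ hσ K hK Φ₀

end
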